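/- The induced Koszul differential δ_W on W(E) ⊗ ∧E* maps the left ideal I = I_L ⊗ ∧E* + W(E) ⊗ I_∧ into itself. -/

import Mathlib

/-!
Context: `A` a commutative ring, `lam ∈ A`, `E` a finitely generated projective
`A`-module, `ω` a nondegenerate alternating bilinear form (`u x = ω x` bijective),
`E = L ⊕ L'` with `L, L'` isotropic.  `W(E)` is the `RingQuot` Weyl algebra with
projection `μ_W`; `I_L ⊆ W(E)` is the left ideal generated by `μ_W(L)`; `∧E*` is the
exterior algebra of `E*`, `I_∧ = ⊕_{n≥1} I_∧ⁿ` (via the evaluation pairing `Pev`).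
The Koszul differential `δ` on `T(E) ⊗ ∧E*` is given as data (hypothesis `hδ`), and
`δ_W` is the induced map on `W(E) ⊗ ∧E*` (hypothesis `hδW`).
-/

open scoped TensorProduct

/-- The defining relation of the Weyl algebra `W(E)`. -/
def weylRel (A : Type*) [CommRing A] {E : Type*} [AddCommGroup E] [Module A E]
    (lam : A) (ω : E →ₗ[A] E →ₗ[A] A) :
    TensorAlgebra A E → TensorAlgebra A E → Prop := fun a b =>
  ∃ x y : E, a = TensorAlgebra.ι A x * TensorAlgebra.ι A y ∧
    b = TensorAlgebra.ι A y * TensorAlgebra.ι A x +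
      algebraMap A (TensorAlgebra A E) (lam * ω x y)

/-- The `n`-th exterior power `∧ⁿE*`, as a submodule of the exterior algebra. -/
def wedgePow (A : Type*) [CommRing A] (E : Type*) [AddCommGroup E] [Module A E]
    (n : ℕ) : Submodule A (ExteriorAlgebra A (Module.Dual A E)) :=
  (LinearMap.range (ExteriorAlgebra.ι A :
    Module.Dual A E →ₗ[A] ExteriorAlgebra A (Module.Dual A E))) ^ n

/-- `I_∧ⁿ`: the elements of `∧ⁿE*` annihilating all `n`-tuples of elements of `L`. -/
def IwedgeN {A : Type*} [CommRing A] {E : Type*} [AddCommGroup E] [Module A E]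
    (L : Submodule A E)
    (Pev : (n : ℕ) → ExteriorAlgebra A (Module.Dual A E) →ₗ[A] ((Fin n → E) → A))
    (n : ℕ) : Submodule A (ExteriorAlgebra A (Module.Dual A E)) :=
  wedgePow A E n ⊓
    ⨅ (x : Fin n → E) (_ : ∀ i, x i ∈ L), LinearMap.ker ((LinearMap.proj x).comp (Pev n))

/-- `I_∧ = ⊕_{n≥1} I_∧ⁿ`, as a submodule of `∧E*`. -/
def Iwedge {A : Type*} [CommRing A] {E : Type*} [AddCommGroup E] [Module A E]
    (L : Submodule A E)
    (Pev : (n : ℕ) → ExteriorAlgebra A (Module.Dual A E) →ₗ[A] ((Fin n → E) → A)) :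
    Submodule A (ExteriorAlgebra A (Module.Dual A E)) :=
  ⨆ n : ℕ, IwedgeN L Pev (n + 1)

/-- The left ideal `I = I_L ⊗ ∧E* + W(E) ⊗ I_∧` of `W(E) ⊗ ∧E*`, as a submodule. -/
noncomputable def IWsub (A : Type*) [CommRing A] {E : Type*} [AddCommGroup E]
    [Module A E] (lam : A) (ω : E →ₗ[A] E →ₗ[A] A) (L : Submodule A E)
    (Pev : (n : ℕ) → ExteriorAlgebra A (Module.Dual A E) →ₗ[A] ((Fin n → E) → A)) :
    Submodule A (RingQuot (weylRel A lam ω) ⊗[A] ExteriorAlgebra A (Module.Dual A E)) :=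
  LinearMap.range (TensorProduct.map
      (((Ideal.span
          (⇑(RingQuot.mkAlgHom A (weylRel A lam ω)) ''
            (⇑(TensorAlgebra.ι A) '' (L : Set E)))).restrictScalars A).subtype)
      (LinearMap.id : ExteriorAlgebra A (Module.Dual A E) →ₗ[A]
        ExteriorAlgebra A (Module.Dual A E))) ⊔
  LinearMap.range (TensorProduct.map
      (LinearMap.id : RingQuot (weylRel A lam ω) →ₗ[A] RingQuot (weylRel A lam ω))
      (Iwedge L Pev).subtype)

/-!
On a generator, `δ_W (μ(x₁ ⋯ xₘ) ⊗ η) = ∑ᵢ μ(x₁ ⋯ x̂ᵢ ⋯ xₘ) ⊗ u(xᵢ) ∧ η`. Since `W(E)` is spanned by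
the images of monomials, `I_L` is spanned over `A` by the `μ(x₁ ⋯ xₘ)` with `xₘ ∈ L`. For such a
generator every term with `i < m` still ends in `xₘ`, so lies in `I_L ⊗ ∧E*`, while the term
`i = m` is `μ(x₁ ⋯ xₘ₋₁) ⊗ u(xₘ) ∧ η`, and `u(xₘ)` vanishes on `L` because `L` is isotropic, so
`u(xₘ) ∧ η ∈ I_∧`. On `W(E) ⊗ I_∧` it suffices that `ξ ∧ -` preserves `I_∧`, which follows from
the Laplace expansion of the determinant pairing along its first row.
-/

section ExteriorPairing

variable {A : Type*} [CommRing A] {E : Type*} [AddCommGroup E] [Module A E]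
  {Pev : (n : ℕ) → ExteriorAlgebra A (Module.Dual A E) →ₗ[A] ((Fin n → E) → A)}

def IsDetPairing
    (Pev : (n : ℕ) → ExteriorAlgebra A (Module.Dual A E) →ₗ[A] ((Fin n → E) → A)) : Prop :=
  ∀ (n : ℕ) (ξs : Fin n → Module.Dual A E) (x : Fin n → E),
    Pev n ((List.ofFn fun i => ExteriorAlgebra.ι A (ξs i)).prod) x =
      Matrix.det (Matrix.of fun i j => ξs i (x j))

theorem wedgePow_eq_span_ιMulti (n : ℕ) :
    wedgePow A E n = Submodule.span A (Set.range (ExteriorAlgebra.ιMulti A n)) :=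
  (ExteriorAlgebra.ιMulti_span_fixedDegree A n).symm

theorem IsDetPairing.apply_ι_mul (hPev : IsDetPairing Pev) {n : ℕ} (ξ : Module.Dual A E)
    {η : ExteriorAlgebra A (Module.Dual A E)} (hη : η ∈ wedgePow A E n) (y : Fin (n + 1) → E) :
    Pev (n + 1) (ExteriorAlgebra.ι A ξ * η) y =
      ∑ j : Fin (n + 1), (-1) ^ (j : ℕ) * ξ (y j) * Pev n η (y ∘ j.succAbove) := by
  rw [wedgePow_eq_span_ιMulti] at hη
  induction hη using Submodule.span_induction with
  | mem _ hη =>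
    obtain ⟨ξs, rfl⟩ := hη
    have hcons : ExteriorAlgebra.ι A ξ * ExteriorAlgebra.ιMulti A n ξs =
        ExteriorAlgebra.ιMulti A (n + 1) (Fin.cons ξ ξs) := by
      simp [ExteriorAlgebra.ιMulti_succ_apply, Matrix.vecTail]
    rw [hcons]
    simp only [ExteriorAlgebra.ιMulti_apply, hPev (n + 1), hPev n]
    rw [Matrix.det_succ_row_zero]
    refine Finset.sum_congr rfl fun j _ => ?_
    simp [Matrix.submatrix]
  | zero => simp
  | add a b _ _ ha hb =>
    simp only [mul_add, map_add, Pi.add_apply, ha, hb, ← Finset.sum_add_distrib]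
  | smul c a _ ha =>
    simp only [mul_smul_comm, map_smul, Pi.smul_apply, smul_eq_mul, ha, Finset.mul_sum]
    exact Finset.sum_congr rfl fun j _ => by ring

theorem mem_IwedgeN_iff {L : Submodule A E} {n : ℕ} {α : ExteriorAlgebra A (Module.Dual A E)} :
    α ∈ IwedgeN L Pev n ↔
      α ∈ wedgePow A E n ∧ ∀ y : Fin n → E, (∀ i, y i ∈ L) → Pev n α y = 0 := by
  simp [IwedgeN, Submodule.mem_iInf]

theorem ι_mul_mem_wedgePow_succ (ξ : Module.Dual A E) {n : ℕ}
    {α : ExteriorAlgebra A (Module.Dual A E)} (hα : α ∈ wedgePow A E n) :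
    ExteriorAlgebra.ι A ξ * α ∈ wedgePow A E (n + 1) := by
  rw [wedgePow, pow_succ']
  exact Submodule.mul_mem_mul (LinearMap.mem_range_self _ ξ) hα

theorem IsDetPairing.ι_mul_mem_IwedgeN_succ (hPev : IsDetPairing Pev) {L : Submodule A E}
    (ξ : Module.Dual A E) {n : ℕ} {α : ExteriorAlgebra A (Module.Dual A E)}
    (hα : α ∈ IwedgeN L Pev n) :
    ExteriorAlgebra.ι A ξ * α ∈ IwedgeN L Pev (n + 1) := by
  rw [mem_IwedgeN_iff] at hα ⊢
  refine ⟨ι_mul_mem_wedgePow_succ ξ hα.1, fun y hy => ?_⟩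
  rw [hPev.apply_ι_mul ξ hα.1]
  exact Finset.sum_eq_zero fun j _ => by rw [hα.2 (y ∘ j.succAbove) fun i => hy _, mul_zero]

theorem IsDetPairing.ι_mul_mem_IwedgeN_succ_of_dual_eq_zero (hPev : IsDetPairing Pev)
    {L : Submodule A E} {ξ : Module.Dual A E} (hξ : ∀ x ∈ L, ξ x = 0) {n : ℕ}
    {α : ExteriorAlgebra A (Module.Dual A E)} (hα : α ∈ wedgePow A E n) :
    ExteriorAlgebra.ι A ξ * α ∈ IwedgeN L Pev (n + 1) := by
  rw [mem_IwedgeN_iff]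
  refine ⟨ι_mul_mem_wedgePow_succ ξ hα, fun y hy => ?_⟩
  rw [hPev.apply_ι_mul ξ hα]
  exact Finset.sum_eq_zero fun j _ => by rw [hξ _ (hy j), mul_zero, zero_mul]

theorem IsDetPairing.ι_mul_mem_Iwedge (hPev : IsDetPairing Pev) {L : Submodule A E}
    (ξ : Module.Dual A E) {α : ExteriorAlgebra A (Module.Dual A E)} (hα : α ∈ Iwedge L Pev) :
    ExteriorAlgebra.ι A ξ * α ∈ Iwedge L Pev := by
  refine Submodule.iSup_induction _ (motive := fun α => ExteriorAlgebra.ι A ξ * α ∈ Iwedge L Pev)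
    hα (fun n β hβ => Submodule.mem_iSup_of_mem (n + 1) (hPev.ι_mul_mem_IwedgeN_succ ξ hβ))
    (by simp) fun a b ha hb => ?_
  rw [mul_add]
  exact add_mem ha hb

theorem IsDetPairing.ι_mul_mem_Iwedge_of_dual_eq_zero (hPev : IsDetPairing Pev)
    {L : Submodule A E} {ξ : Module.Dual A E} (hξ : ∀ x ∈ L, ξ x = 0)
    (η : ExteriorAlgebra A (Module.Dual A E)) :
    ExteriorAlgebra.ι A ξ * η ∈ Iwedge L Pev := by
  have hη : η ∈ Submodule.span A (Set.range fun x : Σ n, (Fin n → Module.Dual A E) =>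
      ExteriorAlgebra.ιMulti A x.1 x.2) := by
    rw [ExteriorAlgebra.ιMulti_span]; trivial
  induction hη using Submodule.span_induction with
  | mem _ hη =>
    obtain ⟨⟨n, ξs⟩, rfl⟩ := hη
    exact Submodule.mem_iSup_of_mem n (hPev.ι_mul_mem_IwedgeN_succ_of_dual_eq_zero hξ
      (ExteriorAlgebra.ιMulti_range A n ⟨ξs, rfl⟩))
  | zero => simp
  | add a b _ _ ha hb => rw [mul_add]; exact add_mem ha hb
  | smul c a _ ha => rw [mul_smul_comm]; exact Submodule.smul_mem _ c ha

end ExteriorPairing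

theorem TensorAlgebra.span_range_listProd (R M : Type*) [CommSemiring R] [AddCommMonoid M]
    [Module R M] :
    Submodule.span R (Set.range fun xs : List M => (xs.map (TensorAlgebra.ι R)).prod) = ⊤ := by
  have h := congrArg Subalgebra.toSubmodule (TensorAlgebra.adjoin_range_ι (R := R) (M := M))
  rw [Algebra.adjoin_eq_span, ← FreeMonoid.mrange_lift, Algebra.top_toSubmodule,
    MonoidHom.coe_mrange] at h
  rw [← h, ← FreeMonoid.toList.surjective.range_comp]
  congr 2 with xs
  exact (FreeMonoid.lift_apply _ xs).symm

section Weyl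

variable {A : Type*} [CommRing A] {E : Type*} [AddCommGroup E] [Module A E]
  {lam : A} {ω : E →ₗ[A] E →ₗ[A] A} {L : Submodule A E}
  {Pev : (n : ℕ) → ExteriorAlgebra A (Module.Dual A E) →ₗ[A] ((Fin n → E) → A)}

local notation "𝒲" => RingQuot (weylRel A lam ω)
local notation "Λ" => ExteriorAlgebra A (Module.Dual A E)
local notation "μ" => RingQuot.mkAlgHom A (weylRel A lam ω)

theorem mem_of_forall_mkAlgHom_listProd_mem {S : Submodule A 𝒲}
    (h : ∀ xs : List E, μ (xs.map (TensorAlgebra.ι A)).prod ∈ S) (w : 𝒲) : w ∈ S := by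
  obtain ⟨t, rfl⟩ := RingQuot.mkAlgHom_surjective A (weylRel A lam ω) w
  have hle : Submodule.span A (Set.range fun xs : List E => (xs.map (TensorAlgebra.ι A)).prod) ≤
      S.comap (μ).toLinearMap :=
    Submodule.span_le.2 (Set.range_subset_iff.2 h)
  exact hle (by rw [TensorAlgebra.span_range_listProd]; trivial)

def HasKoszulFormula (δW : 𝒲 ⊗[A] Λ →ₗ[A] 𝒲 ⊗[A] Λ) : Prop :=
  ∀ (xs : List E) (η : Λ), δW (μ (xs.map (TensorAlgebra.ι A)).prod ⊗ₜ η) =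
    ∑ i : Fin xs.length, μ ((xs.eraseIdx i).map (TensorAlgebra.ι A)).prod ⊗ₜ
      (ExteriorAlgebra.ι A (ω xs[i]) * η)

theorem HasKoszulFormula.of_comp_eq
    {δ : TensorAlgebra A E ⊗[A] Λ →ₗ[A] TensorAlgebra A E ⊗[A] Λ}
    (hδ : ∀ (xs : List E) (η : Λ),
      δ ((xs.map fun x => TensorAlgebra.ι A x).prod ⊗ₜ[A] η) =
        ∑ i : Fin xs.length,
          ((xs.eraseIdx (i : ℕ)).map fun x => TensorAlgebra.ι A x).prod ⊗ₜ[A]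
            (ExteriorAlgebra.ι A (ω (xs.get i)) * η))
    {δW : 𝒲 ⊗[A] Λ →ₗ[A] 𝒲 ⊗[A] Λ}
    (hδW : δW.comp (TensorProduct.map (μ).toLinearMap LinearMap.id) =
      (TensorProduct.map (μ).toLinearMap LinearMap.id).comp δ) :
    HasKoszulFormula δW := by
  intro xs η
  have h := LinearMap.congr_fun hδW ((xs.map (TensorAlgebra.ι A)).prod ⊗ₜ η)
  simp only [LinearMap.comp_apply, TensorProduct.map_tmul, AlgHom.coe_toLinearMap,
    LinearMap.id_apply] at h
  rw [h, hδ, map_sum]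
  simp

theorem tmul_mem_IWsub_of_mem_left {p : 𝒲}
    (hp : p ∈ Ideal.span (μ '' (TensorAlgebra.ι A '' (L : Set E)))) (η : Λ) :
    p ⊗ₜ η ∈ IWsub A lam ω L Pev :=
  Submodule.mem_sup_left
    ⟨(⟨p, hp⟩ : (Ideal.span (μ '' (TensorAlgebra.ι A '' (L : Set E)))).restrictScalars A) ⊗ₜ η,
      rfl⟩

theorem tmul_mem_IWsub_of_mem_right (w : 𝒲) {α : Λ} (hα : α ∈ Iwedge L Pev) :
    w ⊗ₜ α ∈ IWsub A lam ω L Pev :=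
  Submodule.mem_sup_right ⟨w ⊗ₜ (⟨α, hα⟩ : Iwedge L Pev), rfl⟩

theorem HasKoszulFormula.apply_listProd_append_tmul_mem_IWsub
    {δW : 𝒲 ⊗[A] Λ →ₗ[A] 𝒲 ⊗[A] Λ} (hK : HasKoszulFormula δW) (hPev : IsDetPairing Pev)
    (hLiso : ∀ x ∈ L, ∀ y ∈ L, ω x y = 0) (xs : List E) {x : E} (hx : x ∈ L) (η : Λ) :
    δW (μ ((xs ++ [x]).map (TensorAlgebra.ι A)).prod ⊗ₜ η) ∈ IWsub A lam ω L Pev := by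
  rw [hK]
  refine Submodule.sum_mem _ fun ⟨i, hi⟩ _ => ?_
  rcases Nat.lt_or_ge i xs.length with hlt | hge
  · rw [List.eraseIdx_append_of_lt_length hlt, List.map_append, List.prod_append, map_mul]
    refine tmul_mem_IWsub_of_mem_left (Ideal.mul_mem_left _ _ (Ideal.subset_span ?_)) _
    exact ⟨_, ⟨x, hx, rfl⟩, by simp⟩
  · obtain rfl : i = xs.length := by simp at hi; omega
    rw [List.eraseIdx_append_of_length_le le_rfl]
    refine tmul_mem_IWsub_of_mem_right _
      (hPev.ι_mul_mem_Iwedge_of_dual_eq_zero (fun y hy => ?_) η)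
    simpa using hLiso x hx y hy

theorem HasKoszulFormula.apply_tmul_mem_IWsub_of_mem_Iwedge
    {δW : 𝒲 ⊗[A] Λ →ₗ[A] 𝒲 ⊗[A] Λ} (hK : HasKoszulFormula δW) (hPev : IsDetPairing Pev)
    (w : 𝒲) {α : Λ} (hα : α ∈ Iwedge L Pev) :
    δW (w ⊗ₜ α) ∈ IWsub A lam ω L Pev := by
  refine mem_of_forall_mkAlgHom_listProd_mem
    (S := (IWsub A lam ω L Pev).comap (δW ∘ₗ (TensorProduct.mk A 𝒲 Λ).flip α)) (fun xs => ?_) w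
  change δW (_ ⊗ₜ α) ∈ IWsub A lam ω L Pev
  rw [hK]
  exact Submodule.sum_mem _ fun i _ => tmul_mem_IWsub_of_mem_right _ (hPev.ι_mul_mem_Iwedge _ hα)

theorem HasKoszulFormula.apply_tmul_mem_IWsub_of_mem_span
    {δW : 𝒲 ⊗[A] Λ →ₗ[A] 𝒲 ⊗[A] Λ} (hK : HasKoszulFormula δW) (hPev : IsDetPairing Pev)
    (hLiso : ∀ x ∈ L, ∀ y ∈ L, ω x y = 0) {p : 𝒲}
    (hp : p ∈ Ideal.span (μ '' (TensorAlgebra.ι A '' (L : Set E)))) (η : Λ) :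
    δW (p ⊗ₜ η) ∈ IWsub A lam ω L Pev := by
  -- all left multiples, so that the induction over the left ideal closes
  suffices h : ∀ w : 𝒲, ∀ η : Λ, δW ((w * p) ⊗ₜ η) ∈ IWsub A lam ω L Pev by
    simpa using h 1 η
  induction hp using Submodule.span_induction with
  | mem _ hq =>
    obtain ⟨_, ⟨x, hx, rfl⟩, rfl⟩ := hq
    intro w η
    refine mem_of_forall_mkAlgHom_listProd_mem (S := (IWsub A lam ω L Pev).comap
      (δW ∘ₗ (TensorProduct.mk A 𝒲 Λ).flip η ∘ₗ LinearMap.mulRight A (μ (TensorAlgebra.ι A x))))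
      (fun xs => ?_) w
    change δW ((μ _ * μ _) ⊗ₜ η) ∈ IWsub A lam ω L Pev
    rw [← map_mul]
    simpa using hK.apply_listProd_append_tmul_mem_IWsub hPev hLiso xs hx η
  | zero => simp
  | add a b _ _ ha hb =>
    intro w η
    rw [mul_add, TensorProduct.add_tmul, map_add]
    exact add_mem (ha w η) (hb w η)
  | smul c q _ hq =>
    intro w η
    rw [smul_eq_mul, ← mul_assoc]
    exact hq (w * c) η

end Weyl

theorem stmt14_general (A : Type*) [CommRing A] (E : Type*) [AddCommGroup E] [Module A E]
    (lam : A) (ω : E →ₗ[A] E →ₗ[A] A)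
    (L : Submodule A E)
    (hLiso : ∀ x ∈ L, ∀ y ∈ L, ω x y = 0)
    (Pev : (n : ℕ) → ExteriorAlgebra A (Module.Dual A E) →ₗ[A] ((Fin n → E) → A))
    (hPev : ∀ (n : ℕ) (ξs : Fin n → Module.Dual A E) (x : Fin n → E),
      Pev n ((List.ofFn fun i => ExteriorAlgebra.ι A (ξs i)).prod) x =
        Matrix.det (Matrix.of fun i j => ξs i (x j)))
    (δ : TensorAlgebra A E ⊗[A] ExteriorAlgebra A (Module.Dual A E) →ₗ[A]
      TensorAlgebra A E ⊗[A] ExteriorAlgebra A (Module.Dual A E))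
    (hδ : ∀ (xs : List E) (η : ExteriorAlgebra A (Module.Dual A E)),
      δ ((xs.map fun x => TensorAlgebra.ι A x).prod ⊗ₜ[A] η) =
        ∑ i : Fin xs.length,
          ((xs.eraseIdx (i : ℕ)).map fun x => TensorAlgebra.ι A x).prod ⊗ₜ[A]
            (ExteriorAlgebra.ι A (ω (xs.get i)) * η))
    (δW : RingQuot (weylRel A lam ω) ⊗[A] ExteriorAlgebra A (Module.Dual A E) →ₗ[A]
      RingQuot (weylRel A lam ω) ⊗[A] ExteriorAlgebra A (Module.Dual A E))
    (hδW : δW.comp (TensorProduct.map (RingQuot.mkAlgHom A (weylRel A lam ω)).toLinearMap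
        LinearMap.id) =
      (TensorProduct.map (RingQuot.mkAlgHom A (weylRel A lam ω)).toLinearMap
        LinearMap.id).comp δ) :
    ∀ a ∈ IWsub A lam ω L Pev, δW a ∈ IWsub A lam ω L Pev := by
  have hK := HasKoszulFormula.of_comp_eq hδ hδW
  suffices IWsub A lam ω L Pev ≤ (IWsub A lam ω L Pev).comap δW from fun a ha => this ha
  refine sup_le ?_ ?_ <;> rw [TensorProduct.range_map_eq_span_tmul, Submodule.span_le]
  · rintro _ ⟨p, η, rfl⟩
    exact hK.apply_tmul_mem_IWsub_of_mem_span hPev hLiso p.2 η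
  · rintro _ ⟨w, α, rfl⟩
    exact hK.apply_tmul_mem_IWsub_of_mem_Iwedge hPev w α.2

/-- The induced Koszul differential `δ_W` on `W(E) ⊗ ∧E*` maps the
left ideal `I = I_L ⊗ ∧E* + W(E) ⊗ I_∧` into itself. -/
theorem stmt14 (A : Type*) [CommRing A] (E : Type*) [AddCommGroup E] [Module A E]
    (hfin : Module.Finite A E) (hproj : Module.Projective A E)
    (lam : A) (ω : E →ₗ[A] E →ₗ[A] A) (halt : ∀ x : E, ω x x = 0)
    (hbij : Function.Bijective (fun x : E => (ω x : Module.Dual A E)))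
    (L L' : Submodule A E) (hcompl : IsCompl L L')
    (hLiso : ∀ x ∈ L, ∀ y ∈ L, ω x y = 0)
    (hL'iso : ∀ x ∈ L', ∀ y ∈ L', ω x y = 0)
    (Pev : (n : ℕ) → ExteriorAlgebra A (Module.Dual A E) →ₗ[A] ((Fin n → E) → A))
    (hPev : ∀ (n : ℕ) (ξs : Fin n → Module.Dual A E) (x : Fin n → E),
      Pev n ((List.ofFn fun i => ExteriorAlgebra.ι A (ξs i)).prod) x =
        Matrix.det (Matrix.of fun i j => ξs i (x j)))
    (δ : TensorAlgebra A E ⊗[A] ExteriorAlgebra A (Module.Dual A E) →ₗ[A]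
      TensorAlgebra A E ⊗[A] ExteriorAlgebra A (Module.Dual A E))
    (hδ : ∀ (xs : List E) (η : ExteriorAlgebra A (Module.Dual A E)),
      δ ((xs.map fun x => TensorAlgebra.ι A x).prod ⊗ₜ[A] η) =
        ∑ i : Fin xs.length,
          ((xs.eraseIdx (i : ℕ)).map fun x => TensorAlgebra.ι A x).prod ⊗ₜ[A]
            (ExteriorAlgebra.ι A (ω (xs.get i)) * η))
    (δW : RingQuot (weylRel A lam ω) ⊗[A] ExteriorAlgebra A (Module.Dual A E) →ₗ[A]
      RingQuot (weylRel A lam ω) ⊗[A] ExteriorAlgebra A (Module.Dual A E))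
    (hδW : δW.comp (TensorProduct.map (RingQuot.mkAlgHom A (weylRel A lam ω)).toLinearMap
        LinearMap.id) =
      (TensorProduct.map (RingQuot.mkAlgHom A (weylRel A lam ω)).toLinearMap
        LinearMap.id).comp δ) :
    ∀ a ∈ IWsub A lam ω L Pev, δW a ∈ IWsub A lam ω L Pev :=
  stmt14_general A E lam ω L hLiso Pev hPev δ hδ δW hδW
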